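/- Hall-type feasibility for the one-day car rental problem: requests R_d on day d with demands n_i and allowed brand sets j_i ⊆ B can all be satisfied from supplies m_b iff for every subset S of requests, ∑_{i∈S} n_i ≤ ∑_{b ∈ ⋃_{i∈S} j_i} m_b. -/

import Mathlib

/-!
Split request `i` into `n i` unit requests and brand `b` into `m b` unit cars, a unit request
accepting every car of a brand in `j i`. The deficiency condition then implies Hall's
condition for this bipartite graph, and counting, for an injective assignment of cars to unit
requests, how many cars of brand `b` go to request `i` gives the allocation.
-/

open Finset Function

section Necessity

variable {R B M : Type*} [Fintype R] [Fintype B] [DecidableEq B]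
  [AddCommMonoid M] [PartialOrder M] [IsOrderedAddMonoid M] [CanonicallyOrderedAdd M]

theorem sum_le_sum_biUnion_of_allocation {n : R → M} {m : B → M} {j : R → Finset B}
    (x : R → B → M) (hn : ∀ i, n i ≤ ∑ b, x i b) (hj : ∀ i b, b ∉ j i → x i b = 0)
    (hm : ∀ b, ∑ i, x i b ≤ m b) (S : Finset R) :
    ∑ i ∈ S, n i ≤ ∑ b ∈ S.biUnion j, m b :=
  calc ∑ i ∈ S, n i
      ≤ ∑ i ∈ S, ∑ b ∈ S.biUnion j, x i b := sum_le_sum fun i hi =>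
        calc n i ≤ ∑ b, x i b := hn i
          _ = ∑ b ∈ j i, x i b :=
            (sum_subset (subset_univ _) fun b _ hb => hj i b hb).symm
          _ ≤ ∑ b ∈ S.biUnion j, x i b := sum_le_sum_of_subset (subset_biUnion_of_mem j hi)
    _ = ∑ b ∈ S.biUnion j, ∑ i ∈ S, x i b := sum_comm
    _ ≤ ∑ b ∈ S.biUnion j, m b := sum_le_sum fun b _ =>
        (sum_le_sum_of_subset (subset_univ S)).trans (hm b)

end Necessity

section Sufficiency

variable {R B : Type*} [DecidableEq R] [DecidableEq B] {n : R → ℕ} {m : B → ℕ}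

theorem card_filter_sigma_fst_eq [Fintype R] {σ : R → Type*} [∀ i, Fintype (σ i)] (i : R) :
    #{a : Σ i, σ i | a.1 = i} = Fintype.card (σ i) := by
  have : ({a : Σ i, σ i | a.1 = i} : Finset _) = ({i} : Finset R).sigma fun _ => univ := by
    ext a
    simp
  rw [this, card_sigma, sum_singleton, card_univ]

theorem card_le_card_biUnion_sigma {j : R → Finset B}
    (hS : ∀ S : Finset R, ∑ i ∈ S, n i ≤ ∑ b ∈ S.biUnion j, m b) (s : Finset (Σ i, Fin (n i))) :
    #s ≤ #(s.biUnion fun a => (j a.1).sigma fun b => (univ : Finset (Fin (m b)))) :=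
  calc #s ≤ #((s.image Sigma.fst).sigma fun i => (univ : Finset (Fin (n i)))) :=
        card_le_card fun a ha => by simpa using mem_image_of_mem Sigma.fst ha
    _ = ∑ i ∈ s.image Sigma.fst, n i := by simp [card_sigma]
    _ ≤ ∑ b ∈ (s.image Sigma.fst).biUnion j, m b := hS _
    _ = #(((s.image Sigma.fst).biUnion j).sigma fun b => (univ : Finset (Fin (m b)))) := by
        simp [card_sigma]
    _ ≤ _ := card_le_card fun a ha => by
        simp only [mem_sigma, mem_biUnion, mem_image, mem_univ, and_true] at ha ⊢
        obtain ⟨_, ⟨a', ha', rfl⟩, hb⟩ := ha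
        exact ⟨a', ha', hb⟩

theorem exists_allocation_of_injective [Fintype R] [Fintype B] {j : R → Finset B}
    (f : (Σ i, Fin (n i)) → Σ b, Fin (m b)) (hf : Injective f) (hfj : ∀ a, (f a).1 ∈ j a.1) :
    ∃ x : R → B → ℕ, (∀ i, n i ≤ ∑ b, x i b) ∧ (∀ i b, b ∉ j i → x i b = 0) ∧
      (∀ b, ∑ i, x i b ≤ m b) := by
  refine ⟨fun i b => #{a | a.1 = i ∧ (f a).1 = b}, fun i => ?_, fun i b hb => ?_, fun b => ?_⟩
  · rw [← Fintype.card_fin (n i), ← card_filter_sigma_fst_eq (σ := fun i => Fin (n i)) i,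
      card_eq_sum_card_fiberwise (f := fun a => (f a).1) (t := univ) fun _ _ => mem_univ _]
    simp only [filter_filter, le_refl]
  · refine card_eq_zero.2 (filter_eq_empty_iff.2 ?_)
    rintro a - ⟨rfl, rfl⟩
    exact hb (hfj a)
  · calc ∑ i, #{a | a.1 = i ∧ (f a).1 = b}
        = #{a | (f a).1 = b} := by
          rw [card_eq_sum_card_fiberwise (f := Sigma.fst) (t := univ) fun _ _ => mem_univ _]
          simp only [filter_filter, and_comm]
      _ ≤ #{a' : Σ b, Fin (m b) | a'.1 = b} :=
          card_le_card_of_injOn f (fun a ha => by simpa using ha) hf.injOn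
      _ = m b := (card_filter_sigma_fst_eq b).trans (Fintype.card_fin _)

end Sufficiency

/-- Hall-type feasibility for the one-day car rental problem: all requests
can be satisfied iff the deficiency condition holds for every subset of
requests. -/
theorem car_rental_hall (R B : Type*) [Fintype R] [Fintype B]
    [DecidableEq B]
    (n : R → ℕ) (m : B → ℕ) (j : R → Finset B) :
    (∃ x : R → B → ℕ,
      (∀ i, n i ≤ ∑ b, x i b) ∧
      (∀ i b, b ∉ j i → x i b = 0) ∧
      (∀ b, ∑ i, x i b ≤ m b)) ↔
    (∀ S : Finset R, ∑ i ∈ S, n i ≤ ∑ b ∈ S.biUnion j, m b) := by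
  classical
  refine ⟨fun ⟨x, hn, hj, hm⟩ => sum_le_sum_biUnion_of_allocation x hn hj hm, fun hS => ?_⟩
  obtain ⟨f, hf, hfj⟩ :=
    (all_card_le_biUnion_card_iff_exists_injective _).1 (card_le_card_biUnion_sigma hS)
  exact exists_allocation_of_injective f hf fun a => (mem_sigma.1 (hfj a)).1
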